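/- Let D be a finite measure space, Q : D × D → ℝ measurable with |Q| ≤ M, and α : ℝ → ℝ continuously differentiable with α'(0) = 0 and |α''| ≤ C₂. Define S(u)(z) = ∫_D Q(z,z') α(u(z')) dz' on L^∞(D). Then S is Fréchet differentiable at every u ∈ L^∞(D), with derivative (S'(u)h)(z) = ∫_D Q(z,z') α'(u(z')) h(z') dz', and ‖S(u+h) − S(u) − S'(u)h‖_∞ ≤ (M·C₂·μ(D)/2)·‖h‖_∞². -/

import Mathlib

/-!
Pointwise in `z'`, the integrand of `S(u+h) − S(u) − S'(u)h` is `Q z z'` times the second-order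
Taylor remainder of `α` at `u z'`, which the Lagrange form bounds by `C₂/2 · h(z')²`; integrating
this constant bound over the finite measure space gives the estimate. Since `u` and `u + h` take
values in a compact interval, on which `α` and `α'` are bounded, all three integrands are
integrable, so the difference of the integrals is the integral of the difference.
-/

open MeasureTheory Set

theorem abs_sub_sub_deriv_mul_le_of_abs_deriv_deriv_le {f : ℝ → ℝ} {C : ℝ}
    (hf : ContDiff ℝ 2 f) (hf'' : ∀ t, |deriv (deriv f) t| ≤ C) (a b : ℝ) :
    |f (a + b) - f a - deriv f a * b| ≤ C / 2 * b ^ 2 := by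
  rcases eq_or_ne b 0 with rfl | hb
  · simp
  have hab : a ≠ a + b := by simpa [eq_comm] using hb
  obtain ⟨c, -, hc⟩ := taylor_mean_remainder_lagrange_iteratedDeriv (n := 1) hab hf.contDiffOn
  have hderiv : derivWithin f (uIcc a (a + b)) a = deriv f a :=
    (hf.differentiable (by norm_num) a).derivWithin (uniqueDiffOn_uIcc hab a left_mem_uIcc)
  norm_num [taylorWithinEval_succ, hderiv, iteratedDeriv_succ'] at hc
  calc |f (a + b) - f a - deriv f a * b| = |deriv (deriv f) c| * b ^ 2 / 2 := by
        rw [show f (a + b) - f a - deriv f a * b = deriv (deriv f) c * b ^ 2 / 2 by linarith,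
          abs_div, abs_mul, abs_of_nonneg (sq_nonneg b), abs_two]
    _ ≤ C / 2 * b ^ 2 := by nlinarith [hf'' c, sq_nonneg b]

theorem integrable_mul_comp_of_abs_le {D : Type*} [MeasurableSpace D] {μ : Measure D}
    [IsFiniteMeasure μ] {q u : D → ℝ} {g : ℝ → ℝ} {M A : ℝ} (hq : Measurable q)
    (hqM : ∀ x, |q x| ≤ M) (hg : Continuous g) (hu : Measurable u) (huA : ∀ x, |u x| ≤ A) :
    Integrable (fun x => q x * g (u x)) μ := by
  obtain ⟨K, hK⟩ := isCompact_Icc.exists_bound_of_continuousOn (hg.continuousOn (s := Icc (-A) A))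
  refine .of_bound (hq.mul (hg.measurable.comp hu)).aestronglyMeasurable (M * K)
    (ae_of_all _ fun x => ?_)
  rw [norm_mul]
  exact mul_le_mul (hqM x) (hK _ (abs_le.mp (huA x))) (norm_nonneg _) ((abs_nonneg _).trans (hqM x))

theorem stmt8_general
    {D : Type*} [MeasurableSpace D] (μ : Measure D) [IsFiniteMeasure μ]
    (Q : D → D → ℝ) (M C₂ : ℝ)
    (hQmeas : ∀ z, Measurable (Q z))
    (hQ : ∀ z z', |Q z z'| ≤ M)
    (α : ℝ → ℝ) (hα : ContDiff ℝ 2 α)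
    (hα'' : ∀ t : ℝ, |deriv (deriv α) t| ≤ C₂)
    (u h : D → ℝ) (hum : Measurable u) (hhm : Measurable h)
    (A B : ℝ) (huA : ∀ z, |u z| ≤ A) (hhB : ∀ z, |h z| ≤ B) :
    ∀ z : D,
      |(∫ z', Q z z' * α (u z' + h z') ∂μ) - (∫ z', Q z z' * α (u z') ∂μ) -
          ∫ z', Q z z' * deriv α (u z') * h z' ∂μ| ≤
        M * C₂ * (μ Set.univ).toReal / 2 * B ^ 2 := by
  intro z
  have huh (z' : D) : |u z' + h z'| ≤ A + B :=
    (abs_add_le _ _).trans (add_le_add (huA z') (hhB z'))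
  have i₁ := integrable_mul_comp_of_abs_le (μ := μ) (u := fun z' => u z' + h z') (hQmeas z)
    (hQ z) hα.continuous (hum.add hhm) huh
  have i₂ := integrable_mul_comp_of_abs_le (μ := μ) (hQmeas z) (hQ z) hα.continuous hum huA
  have i₃ := (integrable_mul_comp_of_abs_le (μ := μ) (hQmeas z) (hQ z)
    (hα.continuous_deriv (by norm_num)) hum huA).mul_bdd hhm.aestronglyMeasurable
    (ae_of_all _ hhB)
  have remainder_le (z' : D) : ‖Q z z' * α (u z' + h z') - Q z z' * α (u z') -
      Q z z' * deriv α (u z') * h z'‖ ≤ M * (C₂ / 2 * B ^ 2) := by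
    have hC₂ : 0 ≤ C₂ := (abs_nonneg _).trans (hα'' 0)
    have hh : h z' ^ 2 ≤ B ^ 2 := sq_le_sq' (abs_le.mp (hhB z')).1 (abs_le.mp (hhB z')).2
    calc _ = |Q z z'| * |α (u z' + h z') - α (u z') - deriv α (u z') * h z'| := by
          rw [Real.norm_eq_abs, ← abs_mul]; ring_nf
      _ ≤ M * (C₂ / 2 * B ^ 2) := by
          refine mul_le_mul (hQ z z') ?_ (abs_nonneg _) ((abs_nonneg _).trans (hQ z z'))
          exact (abs_sub_sub_deriv_mul_le_of_abs_deriv_deriv_le hα hα'' _ _).trans (by gcongr)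
  rw [← integral_sub i₁ i₂, ← integral_sub (i₁.sub i₂ : Integrable (fun z' => _ - _) μ) i₃,
    ← measureReal_def]
  refine (norm_integral_le_of_norm_le_const (ae_of_all μ remainder_le)).trans_eq ?_
  ring

/-- Fréchet differentiability (quantitative form) of the nonlinear integral
operator `S` of (2.2) on `L^∞(D)`: the candidate derivative
`(S'(u)h)(z) = ∫ Q(z,z') α'(u(z')) h(z') dz'` satisfies the second-order
remainder bound `‖S(u+h) − S(u) − S'(u)h‖_∞ ≤ (M·C₂·μ(D)/2)·‖h‖_∞²`. -/
theorem stmt8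
    {D : Type*} [MeasurableSpace D] (μ : Measure D) [IsFiniteMeasure μ]
    (Q : D → D → ℝ) (M C₂ : ℝ)
    (hQmeas : ∀ z, Measurable (Q z))
    (hQ : ∀ z z', |Q z z'| ≤ M)
    (α : ℝ → ℝ) (hα : ContDiff ℝ 2 α)
    (hα0 : deriv α 0 = 0)
    (hα'' : ∀ t : ℝ, |deriv (deriv α) t| ≤ C₂)
    (u h : D → ℝ) (hum : Measurable u) (hhm : Measurable h)
    (A B : ℝ) (huA : ∀ z, |u z| ≤ A) (hhB : ∀ z, |h z| ≤ B) :
    ∀ z : D,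
      |(∫ z', Q z z' * α (u z' + h z') ∂μ) - (∫ z', Q z z' * α (u z') ∂μ) -
          ∫ z', Q z z' * deriv α (u z') * h z' ∂μ| ≤
        M * C₂ * (μ Set.univ).toReal / 2 * B ^ 2 :=
  stmt8_general μ Q M C₂ hQmeas hQ α hα hα'' u h hum hhm A B huA hhB
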